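/- Let μ be a partition with ℓ ≥ 1 removable corners, of weights R_1,…,R_ℓ, and ℓ+1 addable corners, of weights A_0,…,A_ℓ. Fix a removable corner of μ of weight R_k and let ν = μ with that cell removed. Then in ℚ(q,t): ∏_{s∈R_{μν}} (t^{l_μ(s)}−q^{a_μ(s)+1})/(t^{l_ν(s)}−q^{a_ν(s)+1}) · ∏_{s∈C_{μν}} (q^{a_μ(s)}−t^{l_μ(s)+1})/(q^{a_ν(s)}−t^{l_ν(s)+1}) = (qt·R_k/M)·∏_{j=0}^{ℓ}(1 − A_j/(qt·R_k)) / ∏_{1≤i≤ℓ, i≠k}(1 − R_i/R_k), where M = (1−t)(1−q). (Equality of the row–column product formula for the e_1^⊥-Pieri coefficient c_{μν} with its corner-weight formula.) -/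

import Mathlib

open scoped Classical
open PowerSeries

noncomputable section

abbrev K := FractionRing (MvPolynomial (Fin 2) ℚ)

def q : K := algebraMap (MvPolynomial (Fin 2) ℚ) K (MvPolynomial.X 0)
def t : K := algebraMap (MvPolynomial (Fin 2) ℚ) K (MvPolynomial.X 1)

/-- the weight of a cell `(i,j)` (row `i`, column `j`) is `t^i * q^j` -/
def w (c : ℕ × ℕ) : K := t ^ c.1 * q ^ c.2

/-- `B_μ = Σ_{c ∈ μ} w(c)` -/
def Bsum (μ : YoungDiagram) : K := ∑ c ∈ μ.cells, w c

/-- a removable corner: a cell of `μ` whose removal leaves a Young diagram -/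
def IsRemovable (μ : YoungDiagram) (c : ℕ × ℕ) : Prop :=
  c ∈ μ ∧ IsLowerSet (↑(μ.cells.erase c) : Set (ℕ × ℕ))

/-- an addable corner: a cell not in `μ` whose addition gives a Young diagram -/
def IsAddable (μ : YoungDiagram) (c : ℕ × ℕ) : Prop :=
  c ∉ μ ∧ IsLowerSet (↑(insert c μ.cells) : Set (ℕ × ℕ))

/-- the arm of a cell: number of cells of `μ` strictly east of it in its row -/
def arm (μ : YoungDiagram) (c : ℕ × ℕ) : ℕ :=
  (μ.cells.filter fun d => d.1 = c.1 ∧ c.2 < d.2).card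

/-- the leg of a cell: number of cells of `μ` strictly north of it in its column -/
def leg (μ : YoungDiagram) (c : ℕ × ℕ) : ℕ :=
  (μ.cells.filter fun d => d.2 = c.2 ∧ c.1 < d.1).card

/-! Removing the corner `r = (n, m)` changes only the arms of the cells of row `n` and the legs of
the cells of column `m`. Let `x_j` be the weight of the first cell above column `j` and
`W = qt·w(r)`; the factor of the cell `(n, j)` is `q (1 - x_j / W) / (1 - q x_j / W)`.
Where column `j + 1` is as high as column `j` we have `q x_j = x_{j+1}`, so the row product
telescopes: only the columns where the height drops survive, and they carry exactly the addable
corners in columns `≤ m` and the removable corners in columns `< m` (for which `qt·w = q x_j`).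
Transposing handles the column product, and the other corners of `μ` are split between the two
according as they lie in columns `≤ m` or in rows `≤ n`. -/

open Finset

theorem w_eq_algebraMap_monomial (c : ℕ × ℕ) :
    w c = algebraMap (MvPolynomial (Fin 2) ℚ) K
      (MvPolynomial.monomial (Finsupp.single 1 c.1 + Finsupp.single 0 c.2) 1) := by
  rw [w, q, t, ← map_pow, ← map_pow, ← map_mul, MvPolynomial.X_pow_eq_monomial,
    MvPolynomial.X_pow_eq_monomial, MvPolynomial.monomial_mul, one_mul]

theorem w_injective : Function.Injective w := by
  intro a b h
  rw [w_eq_algebraMap_monomial, w_eq_algebraMap_monomial] at h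
  have h := MvPolynomial.monomial_left_injective one_ne_zero (IsFractionRing.injective _ K h)
  exact Prod.ext (by simpa using DFunLike.congr_fun h 1) (by simpa using DFunLike.congr_fun h 0)

theorem prod_range_div_eq_of_telescoping {F : Type*} [Field F] {a b : ℕ → F} (p : ℕ → Prop)
    [DecidablePred p] {m : ℕ} (hb : ∀ j < m, ¬ p j → b j = a (j + 1))
    (ha : ∀ j ≤ m, a j ≠ 0) :
    ∏ j ∈ range m, a j / b j = a 0 / a m * ∏ j ∈ (range m).filter p, a (j + 1) / b j := by
  induction m with
  | zero => simp [ha 0 le_rfl]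
  | succ m ih =>
    have ham := ha m (by omega)
    have ham' := ha (m + 1) le_rfl
    rw [prod_range_succ, ih (fun j hj => hb j (by omega)) (fun j hj => ha j (by omega)),
      range_add_one, filter_insert]
    by_cases hp : p m
    · rw [if_pos hp, prod_insert (by simp)]
      field_simp
    · rw [if_neg hp, hb m (by omega) hp]
      field_simp

theorem sub_pow_succ_div_sub_pow {F : Type*} [Field F] {Q : F} (hQ : Q ≠ 0) (X : F) (k : ℕ) :
    (X - Q ^ (k + 1)) / (X - Q ^ k) = Q * ((1 - X / Q ^ (k + 1)) / (1 - X / Q ^ k)) := by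
  rw [← neg_div_neg_eq, neg_sub, neg_sub]
  field_simp
  ring

theorem hook_ratio_eq {F : Type*} [Field F] {T Q : F} {wt : ℕ × ℕ → F}
    (hwt : ∀ i j, wt (i, j) = T ^ i * Q ^ j) (hT : T ≠ 0) (hQ : Q ≠ 0)
    {n m c j : ℕ} (hc : n + 1 ≤ c) (hj : j < m) :
    (T ^ (c - (n + 1)) - Q ^ (m - j + 1)) / (T ^ (c - (n + 1)) - Q ^ (m - j)) =
      Q * ((1 - wt (c, j) / wt (n + 1, m + 1)) / (1 - wt (c - 1, j) / wt (n, m))) := by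
  obtain ⟨L, rfl⟩ : ∃ L, c = n + 1 + L := ⟨c - (n + 1), by omega⟩
  obtain ⟨k, rfl⟩ : ∃ k, m = j + k + 1 := ⟨m - j - 1, by omega⟩
  have ha : wt (n + 1 + L, j) / wt (n + 1, j + k + 1 + 1) = T ^ L / Q ^ (k + 1 + 1) := by
    rw [hwt, hwt]
    field_simp
    ring
  have hb : wt (n + 1 + L - 1, j) / wt (n, j + k + 1) = T ^ L / Q ^ (k + 1) := by
    rw [hwt, hwt, show n + 1 + L - 1 = n + L by omega]
    field_simp
    ring
  rw [ha, hb, ← sub_pow_succ_div_sub_pow hQ, show n + 1 + L - (n + 1) = L by omega,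
    show j + k + 1 - j = k + 1 by omega]

theorem weight_succ_div_weight_succ {F : Type*} [Field F] {T Q : F} {wt : ℕ × ℕ → F}
    (hwt : ∀ i j, wt (i, j) = T ^ i * Q ^ j) (hT : T ≠ 0) (hQ : Q ≠ 0) (i j n m : ℕ) :
    wt (i + 1, j + 1) / wt (n + 1, m + 1) = wt (i, j) / wt (n, m) := by
  simp only [hwt]
  field_simp
  ring

theorem filter_erase_snd_lt_eq (s : Finset (ℕ × ℕ)) (r : ℕ × ℕ) :
    (s.erase r).filter (·.2 < r.2) = s.filter (·.2 < r.2) := by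
  rw [filter_erase, erase_eq_of_notMem (by simp)]

section Corners

open YoungDiagram

variable {μ ν : YoungDiagram} {r : ℕ × ℕ}

theorem lt_colLen_iff_lt_rowLen {i j : ℕ} : i < μ.colLen j ↔ j < μ.rowLen i :=
  mem_iff_lt_colLen.symm.trans mem_iff_lt_rowLen

theorem isRemovable_iff {i j : ℕ} :
    IsRemovable μ (i, j) ↔ μ.rowLen i = j + 1 ∧ μ.colLen j = i + 1 := by
  constructor
  · rintro ⟨hc, hlow⟩
    have maximal : ∀ d, (i, j) ≤ d → d ≠ (i, j) → d ∉ μ := fun d hle hne hd => by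
      have : d ∈ (↑(μ.cells.erase (i, j)) : Set (ℕ × ℕ)) := by simp [hne, hd]
      simpa using hlow hle this
    have hrow := maximal (i, j + 1) (by simp) (by simp)
    have hcol := maximal (i + 1, j) (by simp) (by simp)
    rw [mem_iff_lt_rowLen] at hc hrow
    rw [mem_iff_lt_colLen] at hcol
    have := lt_colLen_iff_lt_rowLen.2 hc
    omega
  · rintro ⟨hrow, hcol⟩
    refine ⟨mem_iff_lt_rowLen.2 (by omega), fun x y hyx hx => ?_⟩
    simp only [coe_erase, Set.mem_sdiff, mem_coe, mem_cells, Set.mem_singleton_iff] at hx ⊢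
    refine ⟨μ.isLowerSet hyx hx.1, ?_⟩
    rintro rfl
    obtain ⟨a, b⟩ := x
    obtain ⟨hia, hjb⟩ := Prod.mk_le_mk.1 hyx
    rcases Nat.lt_or_ge j b with hjb' | hbj
    · have := mem_iff_lt_rowLen.1 (μ.up_left_mem hia hjb' hx.1)
      omega
    · have hia' : i < a := by
        by_contra
        exact hx.2 (by rw [Prod.mk.injEq]; omega)
      have := mem_iff_lt_colLen.1 (μ.up_left_mem hia' hjb hx.1)
      omega

theorem isAddable_iff {i j : ℕ} :
    IsAddable μ (i, j) ↔ μ.rowLen i = j ∧ μ.colLen j = i := by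
  constructor
  · rintro ⟨hc, hlow⟩
    have lower : ∀ d, d ≤ (i, j) → d ≠ (i, j) → d ∈ μ := fun d hle hne => by
      have : (i, j) ∈ (↑(insert (i, j) μ.cells) : Set (ℕ × ℕ)) := by simp
      simpa [hne] using hlow hle this
    have hrow : j ≤ μ.rowLen i := by
      rcases j with _ | j
      · omega
      · exact mem_iff_lt_rowLen.1 (lower (i, j) (by simp) (by simp))
    have hcol : i ≤ μ.colLen j := by
      rcases i with _ | i
      · omega
      · exact mem_iff_lt_colLen.1 (lower (i, j) (by simp) (by simp))
    have := mem_iff_lt_rowLen.not.1 hc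
    have := mem_iff_lt_colLen.not.1 hc
    omega
  · rintro ⟨hrow, hcol⟩
    refine ⟨mem_iff_lt_rowLen.not.2 (by omega), fun x y hyx hx => ?_⟩
    simp only [coe_insert, Set.mem_insert_iff, mem_coe, mem_cells] at hx ⊢
    rcases hx with rfl | hx
    · obtain ⟨a, b⟩ := y
      obtain ⟨hai, hbj⟩ := Prod.mk_le_mk.1 hyx
      rcases Nat.lt_or_ge a i with hai' | hia
      · exact Or.inr (μ.up_left_mem le_rfl hbj (mem_iff_lt_colLen.2 (by omega)))
      · rcases Nat.lt_or_ge b j with hbj' | hjb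
        · exact Or.inr (mem_iff_lt_rowLen.2 (by rw [show a = i by omega]; omega))
        · exact Or.inl (by rw [Prod.mk.injEq]; omega)
    · exact Or.inr (μ.isLowerSet hyx hx)

theorem isRemovable_transpose {c : ℕ × ℕ} :
    IsRemovable μ.transpose c ↔ IsRemovable μ c.swap := by
  obtain ⟨i, j⟩ := c
  simp only [Prod.swap_prod_mk, isRemovable_iff, rowLen_transpose, colLen_transpose, and_comm]

theorem isAddable_transpose {c : ℕ × ℕ} :
    IsAddable μ.transpose c ↔ IsAddable μ c.swap := by
  obtain ⟨i, j⟩ := c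
  simp only [Prod.swap_prod_mk, isAddable_iff, rowLen_transpose, colLen_transpose, and_comm]

theorem IsRemovable.lt_or_lt {x : ℕ × ℕ} (hx : IsRemovable μ x) (hr : IsRemovable μ r)
    (hne : x ≠ r) : x.1 < r.1 ∧ r.2 < x.2 ∨ r.1 < x.1 ∧ x.2 < r.2 := by
  obtain ⟨i, j⟩ := x
  obtain ⟨n, m⟩ := r
  rw [isRemovable_iff] at hx hr
  have := μ.rowLen_anti i n
  have := μ.rowLen_anti n i
  have := μ.colLen_anti j m
  have := μ.colLen_anti m j
  simp only [ne_eq, Prod.mk.injEq] at hne ⊢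
  omega

theorem IsAddable.lt_or_lt {a : ℕ × ℕ} (ha : IsAddable μ a) (hr : IsRemovable μ r) :
    a.1 ≤ r.1 ∧ r.2 < a.2 ∨ r.1 < a.1 ∧ a.2 ≤ r.2 := by
  obtain ⟨i, j⟩ := a
  obtain ⟨n, m⟩ := r
  rw [isAddable_iff] at ha
  rw [isRemovable_iff] at hr
  have := μ.rowLen_anti i n
  have := μ.colLen_anti (m + 1) j
  have := lt_colLen_iff_lt_rowLen (μ := μ) (i := n) (j := m + 1)
  dsimp only
  omega

theorem arm_eq (μ : YoungDiagram) (i j : ℕ) : arm μ (i, j) = μ.rowLen i - (j + 1) := by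
  have : μ.cells.filter (fun d => d.1 = i ∧ j < d.2) = {i} ×ˢ Ico (j + 1) (μ.rowLen i) := by
    ext ⟨a, b⟩
    simp only [mem_filter, mem_cells, mem_product, mem_singleton, mem_Ico]
    constructor
    · rintro ⟨h, rfl, hb⟩
      exact ⟨rfl, hb, mem_iff_lt_rowLen.1 h⟩
    · rintro ⟨rfl, hb, h⟩
      exact ⟨mem_iff_lt_rowLen.2 h, rfl, hb⟩
  rw [arm, this, card_product, card_singleton, Nat.card_Ico, one_mul]

theorem leg_eq (μ : YoungDiagram) (i j : ℕ) : leg μ (i, j) = μ.colLen j - (i + 1) := by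
  have : μ.cells.filter (fun d => d.2 = j ∧ i < d.1) = Ico (i + 1) (μ.colLen j) ×ˢ {j} := by
    ext ⟨a, b⟩
    simp only [mem_filter, mem_cells, mem_product, mem_singleton, mem_Ico]
    constructor
    · rintro ⟨h, rfl, ha⟩
      exact ⟨⟨ha, mem_iff_lt_colLen.1 h⟩, rfl⟩
    · rintro ⟨⟨ha, h⟩, rfl⟩
      exact ⟨mem_iff_lt_colLen.2 h, rfl, ha⟩
  rw [leg, this, card_product, card_singleton, Nat.card_Ico, mul_one]

theorem arm_transpose (μ : YoungDiagram) (c : ℕ × ℕ) :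
    arm μ.transpose c = leg μ c.swap := by
  obtain ⟨i, j⟩ := c
  rw [arm_eq, leg_eq, rowLen_transpose, Prod.swap_prod_mk]

theorem leg_transpose (μ : YoungDiagram) (c : ℕ × ℕ) :
    leg μ.transpose c = arm μ c.swap := by
  obtain ⟨i, j⟩ := c
  rw [arm_eq, leg_eq, colLen_transpose, Prod.swap_prod_mk]

theorem isAddable_zero_iff {i : ℕ} : IsAddable μ (i, 0) ↔ μ.colLen 0 = i := by
  have := lt_colLen_iff_lt_rowLen (μ := μ) (i := i) (j := 0)
  rw [isAddable_iff]
  omega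

theorem isAddable_succ_iff {i j : ℕ} :
    IsAddable μ (i, j + 1) ↔ μ.colLen (j + 1) = i ∧ μ.colLen (j + 1) < μ.colLen j := by
  have := lt_colLen_iff_lt_rowLen (μ := μ) (i := i) (j := j + 1)
  have := lt_colLen_iff_lt_rowLen (μ := μ) (i := i) (j := j)
  rw [isAddable_iff]
  omega

theorem isRemovable_iff_colLen {i j : ℕ} :
    IsRemovable μ (i, j) ↔ μ.colLen j = i + 1 ∧ μ.colLen (j + 1) < μ.colLen j := by
  have := lt_colLen_iff_lt_rowLen (μ := μ) (i := i) (j := j + 1)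
  have := lt_colLen_iff_lt_rowLen (μ := μ) (i := i) (j := j)
  rw [isRemovable_iff]
  omega

theorem filter_snd_le_eq_of_isAddable {Add : Finset (ℕ × ℕ)}
    (hAdd : ∀ x, x ∈ Add ↔ IsAddable μ x) (m : ℕ) :
    Add.filter (·.2 ≤ m) = insert (μ.colLen 0, 0)
      (((range m).filter fun j => μ.colLen (j + 1) < μ.colLen j).image
        fun j => (μ.colLen (j + 1), j + 1)) := by
  ext ⟨i, j⟩
  simp only [mem_filter, hAdd, mem_insert, mem_image, mem_range, Prod.mk.injEq]
  rcases j with _ | j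
  · simp [isAddable_zero_iff, eq_comm]
  · simp only [isAddable_succ_iff, Nat.add_right_cancel_iff, exists_eq_right_right,
      Nat.add_one_ne_zero, and_false, false_or]
    omega

theorem filter_snd_lt_eq_of_isRemovable {Rem : Finset (ℕ × ℕ)}
    (hRem : ∀ x, x ∈ Rem ↔ IsRemovable μ x) (m : ℕ) :
    Rem.filter (·.2 < m) =
      ((range m).filter fun j => μ.colLen (j + 1) < μ.colLen j).image
        fun j => (μ.colLen j - 1, j) := by
  ext ⟨i, j⟩
  simp only [mem_filter, hRem, isRemovable_iff_colLen, mem_image, mem_range, Prod.mk.injEq,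
    exists_eq_right_right]
  omega

theorem filter_not_snd_le_eq_of_isAddable {Add : Finset (ℕ × ℕ)}
    (hAdd : ∀ x, x ∈ Add ↔ IsAddable μ x) (hr : IsRemovable μ r) :
    Add.filter (fun a => ¬ a.2 ≤ r.2) = Add.filter (·.1 ≤ r.1) :=
  filter_congr fun a ha => by have := ((hAdd a).1 ha).lt_or_lt hr; omega

theorem filter_erase_not_snd_lt_eq_of_isRemovable {Rem : Finset (ℕ × ℕ)}
    (hRem : ∀ x, x ∈ Rem ↔ IsRemovable μ x) (hr : IsRemovable μ r) :
    (Rem.erase r).filter (fun x => ¬ x.2 < r.2) = Rem.filter (·.1 < r.1) := by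
  ext x
  simp only [mem_filter, mem_erase]
  constructor
  · rintro ⟨⟨hne, hx⟩, h⟩
    have := ((hRem x).1 hx).lt_or_lt hr hne
    exact ⟨hx, by omega⟩
  · rintro ⟨hx, h⟩
    have hne : x ≠ r := by rintro rfl; omega
    have := ((hRem x).1 hx).lt_or_lt hr hne
    exact ⟨⟨hne, hx⟩, by omega⟩

theorem rowLen_of_cells_eq_erase (hν : ν.cells = μ.cells.erase r) (hr : IsRemovable μ r) :
    ν.rowLen r.1 = r.2 := by
  have hrow : ν.row r.1 = (μ.row r.1).erase r := by simp only [row, hν, filter_erase]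
  obtain ⟨n, m⟩ := r
  rw [rowLen_eq_card, hrow, card_erase_of_mem (mem_row_iff.2 ⟨hr.1, rfl⟩), ← rowLen_eq_card,
    (isRemovable_iff.1 hr).1, Nat.add_sub_cancel]

theorem colLen_of_cells_eq_erase (hν : ν.cells = μ.cells.erase r) {j : ℕ} (hj : j ≠ r.2) :
    ν.colLen j = μ.colLen j := by
  have hcol : ν.col j = (μ.col j).erase r := by simp only [col, hν, filter_erase]
  rw [colLen_eq_card, colLen_eq_card, hcol, erase_eq_of_notMem (by simp [mem_col_iff, Ne.symm hj])]

theorem transpose_cells_of_cells_eq_erase (hν : ν.cells = μ.cells.erase r) :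
    ν.transpose.cells = μ.transpose.cells.erase r.swap := by
  ext x
  rw [mem_erase, mem_cells, mem_cells, mem_transpose, mem_transpose, ← mem_cells, hν, mem_erase,
    mem_cells, Ne, Ne, Prod.swap_eq_iff_eq_swap]

end Corners

section HalfProducts

open YoungDiagram

variable {F : Type*} [Field F] {T Q : F} {wt : ℕ × ℕ → F}
  {μ ν : YoungDiagram} {Rem Add : Finset (ℕ × ℕ)} {r : ℕ × ℕ}

theorem prod_row_eq_prod_range (hwt : ∀ i j, wt (i, j) = T ^ i * Q ^ j) (hT : T ≠ 0)
    (hQ : Q ≠ 0) (hr : IsRemovable μ r) (hν : ν.cells = μ.cells.erase r) :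
    ∏ s ∈ ν.row r.1,
        (T ^ leg μ s - Q ^ (arm μ s + 1)) / (T ^ leg ν s - Q ^ (arm ν s + 1)) =
      ∏ j ∈ range r.2, Q * ((1 - wt (μ.colLen j, j) / wt (r.1 + 1, r.2 + 1)) /
        (1 - wt (μ.colLen j - 1, j) / wt r)) := by
  have hνrow := rowLen_of_cells_eq_erase hν hr
  obtain ⟨n, m⟩ := r
  obtain ⟨hrow, hcol⟩ := isRemovable_iff.1 hr
  rw [row_eq_prod, hνrow, prod_product, prod_singleton]
  refine prod_congr rfl fun j hj => ?_
  rw [mem_range] at hj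
  rw [leg_eq, leg_eq, arm_eq, arm_eq, colLen_of_cells_eq_erase hν hj.ne, hrow, hνrow,
    show m + 1 - (j + 1) + 1 = m - j + 1 by omega, show m - (j + 1) + 1 = m - j by omega]
  exact hook_ratio_eq hwt hT hQ (hcol ▸ μ.colLen_anti j m hj.le) hj

theorem prod_row_eq_corner_ratio (hwt : ∀ i j, wt (i, j) = T ^ i * Q ^ j)
    (hinj : Function.Injective wt) (hRem : ∀ x, x ∈ Rem ↔ IsRemovable μ x)
    (hAdd : ∀ x, x ∈ Add ↔ IsAddable μ x) (hr : IsRemovable μ r)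
    (hν : ν.cells = μ.cells.erase r) :
    ∏ s ∈ ν.row r.1,
        (T ^ leg μ s - Q ^ (arm μ s + 1)) / (T ^ leg ν s - Q ^ (arm ν s + 1)) =
      Q ^ (r.2 + 1) / (Q - 1) *
        (∏ a ∈ Add.filter (·.2 ≤ r.2), (1 - wt a / wt (r.1 + 1, r.2 + 1))) /
          ∏ x ∈ Rem.filter (·.2 < r.2), (1 - wt x / wt r) := by
  have hT : T ≠ 0 := fun h => by
    simpa using hinj (a₁ := (1, 0)) (a₂ := (2, 0)) (by simp [hwt, h])
  have hQ : Q ≠ 0 := fun h => by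
    simpa using hinj (a₁ := (0, 1)) (a₂ := (0, 2)) (by simp [hwt, h])
  rw [prod_row_eq_prod_range hwt hT hQ hr hν]
  obtain ⟨n, m⟩ := r
  have hcol := (isRemovable_iff.1 hr).2
  set W := wt (n + 1, m + 1)
  -- the corner-formula factors of the cell just above column `j` (as an addable corner) and of
  -- the top cell of column `j` (as a removable one)
  set a : ℕ → F := fun j => 1 - wt (μ.colLen j, j) / W
  set b : ℕ → F := fun j => 1 - wt (μ.colLen j - 1, j) / wt (n, m)
  have hab : ∀ j < m, ¬ μ.colLen (j + 1) < μ.colLen j → b j = a (j + 1) := fun j hj hlt => by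
    obtain ⟨d, hd⟩ : ∃ d, μ.colLen j = d + 1 :=
      ⟨μ.colLen j - 1, by have := μ.colLen_anti j m hj.le; omega⟩
    have hcj : μ.colLen (j + 1) = μ.colLen j :=
      le_antisymm (μ.colLen_anti j (j + 1) (by omega)) (by omega)
    simp only [a, b, W, hcj, hd, Nat.add_sub_cancel, weight_succ_div_weight_succ hwt hT hQ]
  have ha : ∀ j ≤ m, a j ≠ 0 := fun j hj => by
    have hW : W ≠ 0 := by simp [W, hwt, hT, hQ]
    simp only [a, ne_eq, sub_eq_zero, eq_comm (a := (1 : F)), div_eq_one_iff_eq hW]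
    intro h
    have := congrArg Prod.snd (hinj h)
    simp only at this
    omega
  have ham : a m = (Q - 1) / Q := by
    simp only [a, W, hwt, hcol]
    field_simp
    ring
  rw [prod_mul_distrib, prod_const, card_range, prod_range_div_eq_of_telescoping _ hab ha,
    filter_snd_le_eq_of_isAddable hAdd, filter_snd_lt_eq_of_isRemovable hRem,
    prod_insert (by simp), prod_image (by simp), prod_image (by simp), prod_div_distrib, ham]
  field_simp
  ring

theorem prod_col_eq_corner_ratio (hwt : ∀ i j, wt (i, j) = T ^ i * Q ^ j)
    (hinj : Function.Injective wt) (hRem : ∀ x, x ∈ Rem ↔ IsRemovable μ x)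
    (hAdd : ∀ x, x ∈ Add ↔ IsAddable μ x) (hr : IsRemovable μ r)
    (hν : ν.cells = μ.cells.erase r) :
    ∏ s ∈ ν.col r.2,
        (Q ^ arm μ s - T ^ (leg μ s + 1)) / (Q ^ arm ν s - T ^ (leg ν s + 1)) =
      T ^ (r.1 + 1) / (T - 1) *
        (∏ a ∈ Add.filter (·.1 ≤ r.1), (1 - wt a / wt (r.1 + 1, r.2 + 1))) /
          ∏ x ∈ Rem.filter (·.1 < r.1), (1 - wt x / wt r) := by
  let e := Equiv.prodComm ℕ ℕ
  have key := prod_row_eq_corner_ratio (T := Q) (Q := T) (wt := wt ∘ Prod.swap)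
    (μ := μ.transpose) (ν := ν.transpose) (Rem := Rem.map e.toEmbedding)
    (Add := Add.map e.toEmbedding) (r := r.swap) (fun i j => by simp [hwt, mul_comm])
    (hinj.comp Prod.swap_injective) (by simp [e, isRemovable_transpose, hRem])
    (by simp [e, isAddable_transpose, hAdd]) (isRemovable_transpose.2 hr)
    (transpose_cells_of_cells_eq_erase hν)
  simp only [filter_map, prod_map, arm_transpose, leg_transpose, Function.comp_def,
    Equiv.coe_toEmbedding, e, Equiv.prodComm_apply, Prod.swap_swap, Prod.fst_swap,
    Prod.snd_swap, Prod.swap_prod_mk] at key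
  convert key using 1
  · exact prod_equiv e (by simp [e, mem_row_iff, mem_col_iff, mem_transpose]) (by simp [e])
  · congr!

end HalfProducts

theorem stmt_8_general (μ : YoungDiagram) (Rem Add : Finset (ℕ × ℕ))
    (hRem : ∀ x, x ∈ Rem ↔ IsRemovable μ x)
    (hAdd : ∀ x, x ∈ Add ↔ IsAddable μ x)
    (M : K) (hM : M = (1 - t) * (1 - q))
    (r : ℕ × ℕ) (hr : r ∈ Rem)
    (ν : YoungDiagram) (hν : ν.cells = μ.cells.erase r) :
    (∏ s ∈ ν.cells.filter (fun s => s.1 = r.1),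
        (t ^ leg μ s - q ^ (arm μ s + 1)) / (t ^ leg ν s - q ^ (arm ν s + 1))) *
      (∏ s ∈ ν.cells.filter (fun s => s.2 = r.2),
        (q ^ arm μ s - t ^ (leg μ s + 1)) / (q ^ arm ν s - t ^ (leg ν s + 1))) =
    q * t * w r / M * (∏ a ∈ Add, (1 - w a / (q * t * w r))) /
      ∏ r' ∈ Rem.erase r, (1 - w r' / w r) := by
  have hr' := (hRem r).1 hr
  have hwt : ∀ i j, w (i, j) = t ^ i * q ^ j := fun _ _ => rfl
  have hW : q * t * w r = w (r.1 + 1, r.2 + 1) := by simp only [w]; ring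
  rw [show ν.cells.filter (fun s => s.1 = r.1) = ν.row r.1 from rfl,
    show ν.cells.filter (fun s => s.2 = r.2) = ν.col r.2 from rfl,
    prod_row_eq_corner_ratio hwt w_injective hRem hAdd hr' hν,
    prod_col_eq_corner_ratio hwt w_injective hRem hAdd hr' hν,
    hM, show (1 - t) * (1 - q) = (q - 1) * (t - 1) by ring, div_mul_eq_div_div (q * t * w r), hW,
    ← prod_filter_mul_prod_filter_not Add (·.2 ≤ r.2),
    filter_not_snd_le_eq_of_isAddable hAdd hr',
    ← prod_filter_mul_prod_filter_not (Rem.erase r) (·.2 < r.2), filter_erase_snd_lt_eq,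
    filter_erase_not_snd_lt_eq_of_isRemovable hRem hr', hwt (r.1 + 1)]
  ring

/-- equality of the row–column product formula for the `e₁^⊥`-Pieri
coefficient `c_{μν}` with its corner-weight formula. -/
theorem stmt_8 (μ : YoungDiagram) (Rem Add : Finset (ℕ × ℕ))
    (hRem : ∀ x, x ∈ Rem ↔ IsRemovable μ x)
    (hAdd : ∀ x, x ∈ Add ↔ IsAddable μ x)
    (hne : Rem.Nonempty)
    (M : K) (hM : M = (1 - t) * (1 - q))
    (r : ℕ × ℕ) (hr : r ∈ Rem)
    (ν : YoungDiagram) (hν : ν.cells = μ.cells.erase r) :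
    (∏ s ∈ ν.cells.filter (fun s => s.1 = r.1),
        (t ^ leg μ s - q ^ (arm μ s + 1)) / (t ^ leg ν s - q ^ (arm ν s + 1))) *
      (∏ s ∈ ν.cells.filter (fun s => s.2 = r.2),
        (q ^ arm μ s - t ^ (leg μ s + 1)) / (q ^ arm ν s - t ^ (leg ν s + 1))) =
    q * t * w r / M * (∏ a ∈ Add, (1 - w a / (q * t * w r))) /
      ∏ r' ∈ Rem.erase r, (1 - w r' / w r) :=
  stmt_8_general μ Rem Add hRem hAdd M hM r hr ν hν
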